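/- arXiv:2008.12347 — 3 statements merged into one kernel-verified Lean document; each statement's English description precedes it below -/
import Mathlib

section
/- Let σ > 0 and let f : [0,∞) → ℝ be continuously differentiable with f(0) = 0 and f(x) → 0 as x → ∞. Then ∫₀^∞ (1+x)^{-1-2σ} f(x)² dx ≤ σ^{-2} ∫₀^∞ (1+x)^{1-2σ} f'(x)² dx (both integrals allowed to be infinite). -/
open Set MeasureTheory Filter

/-!
On `[0, R]`, integrating by parts with `(1 + x)^{-1-2σ} = -(2σ)⁻¹ d/dx (1 + x)^{-2σ}` gives
`σ ∫ (1 + x)^{-1-2σ} f² ≤ ∫ (1 + x)^{-2σ} f f'`: the boundary term at `0` vanishes since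
`f 0 = 0`, and the one at `R` is `-(2σ)⁻¹ (1 + R)^{-2σ} f(R)² ≤ 0`. Young's inequality bounds
the right side by `(σ/2) ∫ (1 + x)^{-1-2σ} f² + (2σ)⁻¹ ∫ (1 + x)^{1-2σ} f'²`; absorbing the
first term gives the inequality on `[0, R]`, and letting `R → ∞` gives it on the half-line.
-/

lemma mul_le_div_mul_sq_add_div_mul_sq {s t : ℝ} (hs : 0 < s) (ht : 0 < t) (a b : ℝ) :
    a * b ≤ s / (2 * t) * a ^ 2 + t / (2 * s) * b ^ 2 := by
  have h : s / (2 * t) * a ^ 2 + t / (2 * s) * b ^ 2 - a * b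
      = (s * a - t * b) ^ 2 / (2 * s * t) := by
    field_simp; ring
  nlinarith [show 0 ≤ (s * a - t * b) ^ 2 / (2 * s * t) by positivity]

lemma continuousOn_one_add_rpow (p : ℝ) : ContinuousOn (fun x : ℝ => (1 + x) ^ p) (Ici 0) :=
  (continuous_const_add 1).continuousOn.rpow_const
    fun x hx => Or.inl (by linarith [mem_Ici.1 hx])

lemma one_add_rpow_mul_sq_nonneg {x : ℝ} (hx : 0 ≤ x) (p a : ℝ) : 0 ≤ (1 + x) ^ p * a ^ 2 :=
  mul_nonneg (Real.rpow_nonneg (by linarith) p) (sq_nonneg a)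

lemma hasDerivAt_one_add_rpow_mul_sq {f : ℝ → ℝ} {f' x : ℝ} (hf : HasDerivAt f f' x)
    (hx : 0 < 1 + x) (p : ℝ) :
    HasDerivAt (fun y => (1 + y) ^ p * f y ^ 2)
      (p * ((1 + x) ^ (p - 1) * f x ^ 2) + 2 * ((1 + x) ^ p * (f x * f'))) x := by
  have h1 : HasDerivAt (fun y => (1 + y) ^ p) (1 * p * (1 + x) ^ (p - 1)) x :=
    ((hasDerivAt_id' x).const_add 1).rpow_const (Or.inl hx.ne')
  refine (h1.mul (hf.pow 2)).congr_deriv ?_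
  simp only [Pi.pow_apply, Nat.cast_ofNat]
  ring

/-- Young's inequality `ab ≤ (σ/2t) a² + (t/2σ) b²` with `t = 1 + x`, multiplied by `t^{-2σ}`. -/
lemma one_add_rpow_mul_le {σ x : ℝ} (hσ : 0 < σ) (hx : 0 ≤ x) (a b : ℝ) :
    (1 + x) ^ (-2 * σ) * (a * b)
      ≤ σ / 2 * ((1 + x) ^ (-1 - 2 * σ) * a ^ 2)
        + 1 / (2 * σ) * ((1 + x) ^ (1 - 2 * σ) * b ^ 2) := by
  have ht : 0 < 1 + x := by linarith
  rw [show -1 - 2 * σ = -2 * σ + -1 by ring, show 1 - 2 * σ = -2 * σ + 1 by ring,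
    Real.rpow_add ht, Real.rpow_add ht, Real.rpow_neg_one, Real.rpow_one]
  refine (mul_le_mul_of_nonneg_left (mul_le_div_mul_sq_add_div_mul_sq hσ ht a b)
    (Real.rpow_nonneg ht.le (-2 * σ))).trans_eq ?_
  field_simp

theorem integral_one_add_rpow_mul_sq_le {σ R : ℝ} (hσ : 0 < σ) (hR : 0 ≤ R) {f f' : ℝ → ℝ}
    (hfc : ContinuousOn f (Icc 0 R)) (hf : ∀ x ∈ Ioo 0 R, HasDerivAt f (f' x) x)
    (hf' : ContinuousOn f' (Icc 0 R)) (hf0 : f 0 = 0) :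
    ∫ x in 0..R, (1 + x) ^ (-1 - 2 * σ) * f x ^ 2
      ≤ σ ^ (-2 : ℝ) * ∫ x in 0..R, (1 + x) ^ (1 - 2 * σ) * f' x ^ 2 := by
  have hw (p : ℝ) : ContinuousOn (fun x : ℝ => (1 + x) ^ p) (Icc 0 R) :=
    (continuousOn_one_add_rpow p).mono Icc_subset_Ici_self
  have hint {g : ℝ → ℝ} (hg : ContinuousOn g (Icc 0 R)) : IntervalIntegrable g volume 0 R :=
    (hg.mono (uIcc_of_le hR).subset).intervalIntegrable
  set A := ∫ x in 0..R, (1 + x) ^ (-1 - 2 * σ) * f x ^ 2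
  set B := ∫ x in 0..R, (1 + x) ^ (1 - 2 * σ) * f' x ^ 2
  set C := ∫ x in 0..R, (1 + x) ^ (-2 * σ) * (f x * f' x)
  have iA : IntervalIntegrable (fun x => (1 + x) ^ (-1 - 2 * σ) * f x ^ 2) volume 0 R :=
    hint ((hw _).mul (hfc.pow 2))
  have iB : IntervalIntegrable (fun x => (1 + x) ^ (1 - 2 * σ) * f' x ^ 2) volume 0 R :=
    hint ((hw _).mul (hf'.pow 2))
  have iC : IntervalIntegrable (fun x => (1 + x) ^ (-2 * σ) * (f x * f' x)) volume 0 R :=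
    hint ((hw _).mul (hfc.mul hf'))
  have hparts : (1 + R) ^ (-2 * σ) * f R ^ 2 = -2 * σ * A + 2 * C := by
    have hderiv (x : ℝ) (hx : x ∈ Ioo 0 R) :
        HasDerivAt (fun y => (1 + y) ^ (-2 * σ) * f y ^ 2)
          (-2 * σ * ((1 + x) ^ (-1 - 2 * σ) * f x ^ 2)
            + 2 * ((1 + x) ^ (-2 * σ) * (f x * f' x))) x := by
      convert hasDerivAt_one_add_rpow_mul_sq (hf x hx) (by linarith [hx.1]) (-2 * σ) using 5
      ring
    have := intervalIntegral.integral_eq_sub_of_hasDerivAt_of_le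
      (f := fun y => (1 + y) ^ (-2 * σ) * f y ^ 2) hR
      ((hw _).mul (hfc.pow 2)) hderiv ((iA.const_mul _).add (iC.const_mul _))
    rw [intervalIntegral.integral_add (iA.const_mul _) (iC.const_mul _),
      intervalIntegral.integral_const_mul, intervalIntegral.integral_const_mul] at this
    have h0 : (1 + 0 : ℝ) ^ (-2 * σ) * f 0 ^ 2 = 0 := by simp [hf0]
    linarith
  have hAC : σ * A ≤ C := by
    linarith [one_add_rpow_mul_sq_nonneg hR (-2 * σ) (f R)]
  have hCAB : C ≤ σ / 2 * A + 1 / (2 * σ) * B := by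
    calc C ≤ ∫ x in 0..R, (σ / 2 * ((1 + x) ^ (-1 - 2 * σ) * f x ^ 2)
          + 1 / (2 * σ) * ((1 + x) ^ (1 - 2 * σ) * f' x ^ 2)) :=
          intervalIntegral.integral_mono_on hR iC ((iA.const_mul _).add (iB.const_mul _))
            fun x hx => one_add_rpow_mul_le hσ hx.1 _ _
      _ = σ / 2 * A + 1 / (2 * σ) * B := by
          rw [intervalIntegral.integral_add (iA.const_mul _) (iB.const_mul _),
            intervalIntegral.integral_const_mul, intervalIntegral.integral_const_mul]
  have hAB : σ ^ 2 * A ≤ B := by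
    have := hAC.trans hCAB
    field_simp at this
    nlinarith
  rw [Real.rpow_neg_ofNat, zpow_neg, zpow_ofNat, ← div_eq_inv_mul, le_div_iff₀ (by positivity)]
  linarith

lemma setLIntegral_Ioi_le_of_forall_Ioc_le {a : ℝ} {G : ℝ → ENNReal} {C : ENNReal}
    (hG : AEMeasurable G (volume.restrict (Ioi a)))
    (h : ∀ R, a ≤ R → ∫⁻ x in Ioc a R, G x ≤ C) :
    ∫⁻ x in Ioi a, G x ≤ C := by
  rw [← (aecover_Iic tendsto_id).iSup_lintegral_eq_of_countably_generated hG]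
  refine iSup_le fun R => ?_
  rw [Measure.restrict_restrict measurableSet_Iic, Iic_inter_Ioi]
  rcases le_or_gt a R with haR | hRa
  · exact h R haR
  · simp [Ioc_eq_empty_of_le hRa.le]

lemma setLIntegral_Ioi_ofReal_le_mul_of_forall_intervalIntegral_le {a c : ℝ} {g h : ℝ → ℝ}
    (hc : 0 ≤ c) (hg : ContinuousOn g (Ici a)) (hh : ContinuousOn h (Ici a))
    (hg0 : ∀ x ∈ Ici a, 0 ≤ g x) (hh0 : ∀ x ∈ Ici a, 0 ≤ h x)
    (hle : ∀ R, a ≤ R → ∫ x in a..R, g x ≤ c * ∫ x in a..R, h x) :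
    ∫⁻ x in Ioi a, ENNReal.ofReal (g x)
      ≤ ENNReal.ofReal c * ∫⁻ x in Ioi a, ENNReal.ofReal (h x) := by
  have hmeas : AEMeasurable g (volume.restrict (Ioi a)) :=
    (hg.mono Ioi_subset_Ici_self).aemeasurable measurableSet_Ioi
  refine setLIntegral_Ioi_le_of_forall_Ioc_le hmeas.ennreal_ofReal fun R haR => ?_
  have ofReal_integral {u : ℝ → ℝ} (hu : ContinuousOn u (Ici a))
      (hu0 : ∀ x ∈ Ici a, 0 ≤ u x) :
      ENNReal.ofReal (∫ x in a..R, u x) = ∫⁻ x in Ioc a R, ENNReal.ofReal (u x) := by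
    rw [intervalIntegral.integral_of_le haR]
    refine ofReal_integral_eq_lintegral_ofReal
      ((hu.mono Icc_subset_Ici_self).integrableOn_Icc.mono_set Ioc_subset_Icc_self) ?_
    filter_upwards [ae_restrict_mem measurableSet_Ioc] with x hx using hu0 x (mem_Ici.2 hx.1.le)
  calc ∫⁻ x in Ioc a R, ENNReal.ofReal (g x)
      = ENNReal.ofReal (∫ x in a..R, g x) := (ofReal_integral hg hg0).symm
    _ ≤ ENNReal.ofReal (c * ∫ x in a..R, h x) := ENNReal.ofReal_le_ofReal (hle R haR)
    _ = ENNReal.ofReal c * ∫⁻ x in Ioc a R, ENNReal.ofReal (h x) := by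
      rw [ENNReal.ofReal_mul hc, ofReal_integral hh hh0]
    _ ≤ ENNReal.ofReal c * ∫⁻ x in Ioi a, ENNReal.ofReal (h x) := by
      gcongr
      exact Ioc_subset_Ioi_self

theorem stmt_0_general (σ : ℝ) (hσ : 0 < σ) (f f' : ℝ → ℝ)
    (hderiv : ∀ x ∈ Ici (0:ℝ), HasDerivWithinAt f (f' x) (Ici 0) x)
    (hcont : ContinuousOn f' (Ici 0))
    (hf0 : f 0 = 0) :
    ∫⁻ x in Ioi (0:ℝ), ENNReal.ofReal ((1 + x) ^ (-1 - 2*σ) * (f x)^2)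
      ≤ ENNReal.ofReal (σ ^ (-2 : ℝ)) *
        ∫⁻ x in Ioi (0:ℝ), ENNReal.ofReal ((1 + x) ^ (1 - 2*σ) * (f' x)^2) := by
  have hfc : ContinuousOn f (Ici 0) := fun x hx => (hderiv x hx).continuousWithinAt
  refine setLIntegral_Ioi_ofReal_le_mul_of_forall_intervalIntegral_le
    (Real.rpow_nonneg hσ.le _) ((continuousOn_one_add_rpow _).mul (hfc.pow 2))
    ((continuousOn_one_add_rpow _).mul (hcont.pow 2))
    (fun _ hx => one_add_rpow_mul_sq_nonneg hx _ _)
    (fun _ hx => one_add_rpow_mul_sq_nonneg hx _ _)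
    fun R hR => ?_
  exact integral_one_add_rpow_mul_sq_le hσ hR (hfc.mono Icc_subset_Ici_self)
    (fun x hx => (hderiv x hx.1.le).hasDerivAt (Ici_mem_nhds hx.1))
    (hcont.mono Icc_subset_Ici_self) hf0

/-- Weighted Hardy-type inequality: for `σ > 0` and `f` continuously differentiable on
`[0,∞)` with `f 0 = 0` and `f x → 0` as `x → ∞`,
`∫₀^∞ (1+x)^{-1-2σ} f² ≤ σ^{-2} ∫₀^∞ (1+x)^{1-2σ} (f')²` (integrals may be infinite). -/
theorem stmt_0 (σ : ℝ) (hσ : 0 < σ) (f f' : ℝ → ℝ)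
    (hderiv : ∀ x ∈ Ici (0:ℝ), HasDerivWithinAt f (f' x) (Ici 0) x)
    (hcont : ContinuousOn f' (Ici 0))
    (hf0 : f 0 = 0)
    (hlim : Tendsto f atTop (nhds 0)) :
    ∫⁻ x in Ioi (0:ℝ), ENNReal.ofReal ((1 + x) ^ (-1 - 2*σ) * (f x)^2)
      ≤ ENNReal.ofReal (σ ^ (-2 : ℝ)) *
        ∫⁻ x in Ioi (0:ℝ), ENNReal.ofReal ((1 + x) ^ (1 - 2*σ) * (f' x)^2) :=
  stmt_0_general σ hσ f f' hderiv hcont hf0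
end

section
/- Let f : ℝ² → ℝ be smooth and compactly supported. Then sup_{(x,y)} f(x,y)² ≤ 2 ( ‖∂_x f‖_{L²(ℝ²)} ‖∂_y f‖_{L²(ℝ²)} + ‖f‖_{L²(ℝ²)} ‖∂_x∂_y f‖_{L²(ℝ²)} ). -/
open Set MeasureTheory Filter

/-- Partial derivative in the first variable. -/
noncomputable def pdx (f : ℝ → ℝ → ℝ) : ℝ → ℝ → ℝ :=
  fun x y => deriv (fun x' => f x' y) x

/-- Partial derivative in the second variable. -/
noncomputable def pdy (f : ℝ → ℝ → ℝ) : ℝ → ℝ → ℝ :=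
  fun x y => deriv (fun y' => f x y') y

/-- The `L²(ℝ²)` norm of a function of two real variables. -/
noncomputable def l2norm (g : ℝ → ℝ → ℝ) : ℝ :=
  Real.sqrt (∫ p : ℝ × ℝ, (g p.1 p.2)^2)

open Function

section aux
variable {F : ℝ → ℝ → ℝ}

lemma sect_contDiff_snd (hF : ContDiff ℝ (⊤ : ℕ∞) (uncurry F)) (x : ℝ) :
    ContDiff ℝ (⊤ : ℕ∞) (fun y => F x y) :=
  hF.comp (ContDiff.prodMk (contDiff_const (c := x)) contDiff_id)

lemma sect_contDiff_fst (hF : ContDiff ℝ (⊤ : ℕ∞) (uncurry F)) (y : ℝ) :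
    ContDiff ℝ (⊤ : ℕ∞) (fun x => F x y) :=
  hF.comp (ContDiff.prodMk contDiff_id (contDiff_const (c := y)))

lemma sect_supp_snd (h : HasCompactSupport (uncurry F)) (x : ℝ) :
    HasCompactSupport (fun y => F x y) := by
  apply HasCompactSupport.intro (h.image continuous_snd)
  intro y hy
  by_contra h0
  exact hy ⟨(x, y), subset_closure (by simpa [Function.uncurry] using h0), rfl⟩

lemma sect_supp_fst (h : HasCompactSupport (uncurry F)) (y : ℝ) :
    HasCompactSupport (fun x => F x y) := by
  apply HasCompactSupport.intro (h.image continuous_fst)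
  intro x hx
  by_contra h0
  exact hx ⟨(x, y), subset_closure (by simpa [Function.uncurry] using h0), rfl⟩

lemma hasDerivAt_pdy (hF : ContDiff ℝ (⊤ : ℕ∞) (uncurry F)) (x y : ℝ) :
    HasDerivAt (fun y' => F x y') (pdy F x y) y :=
  (((sect_contDiff_snd hF x).differentiable (by simp)) y).hasDerivAt

lemma hasDerivAt_pdx (hF : ContDiff ℝ (⊤ : ℕ∞) (uncurry F)) (x y : ℝ) :
    HasDerivAt (fun x' => F x' y) (pdx F x y) x :=
  (((sect_contDiff_fst hF y).differentiable (by simp)) x).hasDerivAt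

lemma uncurry_pdy_eq (hF : ContDiff ℝ (⊤ : ℕ∞) (uncurry F)) :
    uncurry (pdy F) = fun p : ℝ × ℝ => fderiv ℝ (uncurry F) p ((0 : ℝ), (1 : ℝ)) := by
  funext p
  obtain ⟨x, y⟩ := p
  have h1 : HasDerivAt (fun y' : ℝ => (x, y')) ((0 : ℝ), (1 : ℝ)) y :=
    (hasDerivAt_const y x).prodMk (hasDerivAt_id y)
  have h2 := ((hF.differentiable (by simp)) (x, y)).hasFDerivAt.comp_hasDerivAt y h1
  exact h2.deriv

lemma uncurry_pdx_eq (hF : ContDiff ℝ (⊤ : ℕ∞) (uncurry F)) :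
    uncurry (pdx F) = fun p : ℝ × ℝ => fderiv ℝ (uncurry F) p ((1 : ℝ), (0 : ℝ)) := by
  funext p
  obtain ⟨x, y⟩ := p
  have h1 : HasDerivAt (fun x' : ℝ => (x', y)) ((1 : ℝ), (0 : ℝ)) x :=
    (hasDerivAt_id x).prodMk (hasDerivAt_const x y)
  have h2 := ((hF.differentiable (by simp)) (x, y)).hasFDerivAt.comp_hasDerivAt x h1
  exact h2.deriv

lemma pdy_contDiff (hF : ContDiff ℝ (⊤ : ℕ∞) (uncurry F)) : ContDiff ℝ (⊤ : ℕ∞) (uncurry (pdy F)) := by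
  rw [uncurry_pdy_eq hF]
  exact (ContinuousLinearMap.apply ℝ ℝ ((0 : ℝ), (1 : ℝ))).contDiff.comp
    (hF.fderiv_right (by simp))

lemma pdx_contDiff (hF : ContDiff ℝ (⊤ : ℕ∞) (uncurry F)) : ContDiff ℝ (⊤ : ℕ∞) (uncurry (pdx F)) := by
  rw [uncurry_pdx_eq hF]
  exact (ContinuousLinearMap.apply ℝ ℝ ((1 : ℝ), (0 : ℝ))).contDiff.comp
    (hF.fderiv_right (by simp))

lemma pdy_supp (hF : ContDiff ℝ (⊤ : ℕ∞) (uncurry F)) (h : HasCompactSupport (uncurry F)) :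
    HasCompactSupport (uncurry (pdy F)) := by
  rw [uncurry_pdy_eq hF]
  refine (h.fderiv ℝ).mono' fun p hp => subset_closure ?_
  intro h0
  exact hp (by simp [h0])

lemma pdx_supp (hF : ContDiff ℝ (⊤ : ℕ∞) (uncurry F)) (h : HasCompactSupport (uncurry F)) :
    HasCompactSupport (uncurry (pdx F)) := by
  rw [uncurry_pdx_eq hF]
  refine (h.fderiv ℝ).mono' fun p hp => subset_closure ?_
  intro h0
  exact hp (by simp [h0])

lemma ftc_snd (hF : ContDiff ℝ (⊤ : ℕ∞) (uncurry F)) (h : HasCompactSupport (uncurry F)) (x y : ℝ) :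
    (∫ y' in Iic y, pdy F x y') = F x y :=
  HasCompactSupport.integral_Iic_deriv_eq ((sect_contDiff_snd hF x).of_le (by simp))
    (sect_supp_snd h x) y

lemma ftc_fst (hF : ContDiff ℝ (⊤ : ℕ∞) (uncurry F)) (h : HasCompactSupport (uncurry F)) (x y : ℝ) :
    (∫ x' in Iic x, pdx F x' y) = F x y :=
  HasCompactSupport.integral_Iic_deriv_eq ((sect_contDiff_fst hF y).of_le (by simp))
    (sect_supp_fst h y) x

end aux

lemma cs_lemma {a b : ℝ → ℝ → ℝ} (ha : Continuous (uncurry a))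
    (hsa : HasCompactSupport (uncurry a))
    (hb : Continuous (uncurry b)) (hsb : HasCompactSupport (uncurry b)) :
    (∫ p : ℝ × ℝ, |a p.1 p.2 * b p.1 p.2|) ≤ l2norm a * l2norm b := by
  have hpq : Real.HolderConjugate 2 2 := Real.holderConjugate_iff.mpr ⟨one_lt_two, by norm_num⟩
  have hma : MemLp (uncurry a) (ENNReal.ofReal 2) (volume : Measure (ℝ × ℝ)) :=
    ha.memLp_of_hasCompactSupport hsa
  have hmb : MemLp (uncurry b) (ENNReal.ofReal 2) (volume : Measure (ℝ × ℝ)) :=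
    hb.memLp_of_hasCompactSupport hsb
  have key := integral_mul_norm_le_Lp_mul_Lq (μ := (volume : Measure (ℝ × ℝ))) hpq hma hmb
  have h1 : (∫ p : ℝ × ℝ, |a p.1 p.2 * b p.1 p.2|)
      = ∫ p : ℝ × ℝ, ‖uncurry a p‖ * ‖uncurry b p‖ := by
    congr 1; funext p; rw [abs_mul]; rfl
  have h2 : ∀ (c : ℝ → ℝ → ℝ), (∫ p : ℝ × ℝ, ‖uncurry c p‖ ^ (2:ℝ)) = ∫ p : ℝ × ℝ, (c p.1 p.2)^2 := by
    intro c
    congr 1; funext p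
    rw [show ((2:ℝ)) = ((2:ℕ):ℝ) by norm_num, Real.rpow_natCast]
    simp [Function.uncurry, sq_abs]
  rw [h1]
  refine key.trans_eq ?_
  rw [h2 a, h2 b, ← Real.sqrt_eq_rpow, ← Real.sqrt_eq_rpow]
  rfl

/-- Anisotropic Agmon inequality: for `f` smooth and compactly supported on `ℝ²`,
`sup f² ≤ 2 (‖∂ₓf‖₂ ‖∂_y f‖₂ + ‖f‖₂ ‖∂ₓ∂_y f‖₂)`. -/
theorem stmt_3 (f : ℝ → ℝ → ℝ)
    (hf : ContDiff ℝ (⊤ : ℕ∞) (Function.uncurry f))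
    (hsupp : HasCompactSupport (Function.uncurry f)) :
    ∀ x y : ℝ, (f x y)^2
      ≤ 2 * (l2norm (pdx f) * l2norm (pdy f) + l2norm f * l2norm (pdx (pdy f))) := by
  intro x y
  -- smoothness and support of the various partial derivatives of f
  have hfy := pdy_contDiff hf
  have hfy_supp := pdy_supp hf hsupp
  have hfx := pdx_contDiff hf
  have hfx_supp := pdx_supp hf hsupp
  have hfxy := pdx_contDiff hfy
  have hfxy_supp := pdx_supp hfy hfy_supp
  -- the auxiliary function G = f²
  set G : ℝ → ℝ → ℝ := fun a b => f a b * f a b with hG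
  have hGc : ContDiff ℝ (⊤ : ℕ∞) (uncurry G) := hf.mul hf
  have hGs : HasCompactSupport (uncurry G) := hsupp.mul_right
  have hGy : ∀ a b : ℝ, pdy G a b = pdy f a b * f a b + f a b * pdy f a b := fun a b =>
    ((hasDerivAt_pdy hf a b).mul (hasDerivAt_pdy hf a b)).deriv
  have hGxy : ∀ a b : ℝ, pdx (pdy G) a b =
      (pdx (pdy f) a b * f a b + pdy f a b * pdx f a b) +
      (pdx f a b * pdy f a b + f a b * pdx (pdy f) a b) := by
    intro a b
    have h1 : (fun x' => pdy G x' b) = fun x' => pdy f x' b * f x' b + f x' b * pdy f x' b :=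
      funext fun x' => hGy x' b
    have h2 := (((hasDerivAt_pdx hfy a b).mul (hasDerivAt_pdx hf a b)).add
        ((hasDerivAt_pdx hf a b).mul (hasDerivAt_pdx hfy a b)))
    show deriv (fun x' => pdy G x' b) a = _
    rw [h1]
    exact h2.deriv
  -- pointwise bound on the mixed derivative of G
  have hDb : ∀ a b : ℝ, |pdx (pdy G) a b|
      ≤ 2 * (|pdx f a b * pdy f a b| + |f a b * pdx (pdy f) a b|) := by
    intro a b
    have he : (pdx (pdy f) a b * f a b + pdy f a b * pdx f a b) +
        (pdx f a b * pdy f a b + f a b * pdx (pdy f) a b)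
        = 2 * (pdx f a b * pdy f a b + f a b * pdx (pdy f) a b) := by ring
    rw [hGxy a b, he, abs_mul, abs_two]
    exact mul_le_mul_of_nonneg_left (abs_add_le _ _) (by norm_num)
  -- FTC: f² as a double integral of the mixed derivative of G
  have hDc : Continuous (uncurry (pdx (pdy G))) := (pdx_contDiff (pdy_contDiff hGc)).continuous
  have hDs : HasCompactSupport (uncurry (pdx (pdy G))) :=
    pdx_supp (pdy_contDiff hGc) (pdy_supp hGc hGs)
  have hDi : Integrable (fun p : ℝ × ℝ => pdx (pdy G) p.1 p.2) volume :=
    hDc.integrable_of_hasCompactSupport hDs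
  have inner : ∀ y' : ℝ, pdy G x y' = ∫ x' in Iic x, pdx (pdy G) x' y' :=
    fun y' => (ftc_fst (pdy_contDiff hGc) (pdy_supp hGc hGs) x y').symm
  have key : f x y ^ 2 = ∫ y' in Iic y, ∫ x' in Iic x, pdx (pdy G) x' y' := by
    rw [sq, show f x y * f x y = G x y from rfl, ← ftc_snd hGc hGs x y]
    exact integral_congr_ae (Eventually.of_forall fun y' => inner y')
  -- integrability of the swapped integrand
  have hEc : Continuous (fun q : ℝ × ℝ => pdx (pdy G) q.2 q.1) :=
    hDc.comp continuous_swap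
  have hEs : HasCompactSupport (fun q : ℝ × ℝ => pdx (pdy G) q.2 q.1) :=
    hDs.comp_homeomorph (Homeomorph.prodComm ℝ ℝ)
  have hEi : Integrable (fun q : ℝ × ℝ => pdx (pdy G) q.2 q.1) volume :=
    hEc.integrable_of_hasCompactSupport hEs
  have hprod : (volume.restrict (Iic y)).prod (volume.restrict (Iic x))
      = (volume : Measure (ℝ × ℝ)).restrict (Iic y ×ˢ Iic x) := by
    rw [MeasureTheory.Measure.volume_eq_prod, Measure.prod_restrict]
  have hE_res : Integrable (fun q : ℝ × ℝ => pdx (pdy G) q.2 q.1)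
      ((volume.restrict (Iic y)).prod (volume.restrict (Iic x))) := by
    rw [hprod]; exact hEi.restrict
  have step1 : f x y ^ 2
      = ∫ q : ℝ × ℝ, pdx (pdy G) q.2 q.1
          ∂((volume.restrict (Iic y)).prod (volume.restrict (Iic x))) :=
    key.trans (integral_integral hE_res)
  have step2 : f x y ^ 2 ≤ ∫ p : ℝ × ℝ, |pdx (pdy G) p.1 p.2| := by
    calc f x y ^ 2
        ≤ |∫ q : ℝ × ℝ, pdx (pdy G) q.2 q.1
            ∂((volume.restrict (Iic y)).prod (volume.restrict (Iic x)))| := by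
          rw [step1]; exact le_abs_self _
      _ ≤ ∫ q : ℝ × ℝ, |pdx (pdy G) q.2 q.1|
            ∂((volume.restrict (Iic y)).prod (volume.restrict (Iic x))) := by
          simpa using norm_integral_le_integral_norm (fun q : ℝ × ℝ => pdx (pdy G) q.2 q.1)
      _ ≤ ∫ q : ℝ × ℝ, |pdx (pdy G) q.2 q.1| := by
          rw [hprod]
          exact setIntegral_le_integral hEi.abs (Eventually.of_forall fun q => abs_nonneg _)
      _ = ∫ p : ℝ × ℝ, |pdx (pdy G) p.1 p.2| := by
          rw [MeasureTheory.Measure.volume_eq_prod]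
          exact integral_prod_swap (fun p : ℝ × ℝ => |pdx (pdy G) p.1 p.2|)
  -- integrability of the products on the right-hand side
  have hA : Integrable (fun p : ℝ × ℝ => pdx f p.1 p.2 * pdy f p.1 p.2) volume :=
    (hfx.continuous.mul hfy.continuous).integrable_of_hasCompactSupport hfx_supp.mul_right
  have hB : Integrable (fun p : ℝ × ℝ => f p.1 p.2 * pdx (pdy f) p.1 p.2) volume :=
    ((hf.continuous).mul hfxy.continuous).integrable_of_hasCompactSupport hsupp.mul_right
  have step3 : (∫ p : ℝ × ℝ, |pdx (pdy G) p.1 p.2|)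
      ≤ 2 * ((∫ p : ℝ × ℝ, |pdx f p.1 p.2 * pdy f p.1 p.2|)
        + ∫ p : ℝ × ℝ, |f p.1 p.2 * pdx (pdy f) p.1 p.2|) := by
    have := integral_mono hDi.abs ((hA.abs.add hB.abs).const_mul 2)
      (fun p => hDb p.1 p.2)
    simp only [Pi.add_apply] at this
    rwa [integral_const_mul, integral_add hA.abs hB.abs] at this
  have cs1 := cs_lemma hfx.continuous hfx_supp hfy.continuous hfy_supp
  have cs2 := cs_lemma hf.continuous hsupp hfxy.continuous hfxy_supp
  calc f x y ^ 2 ≤ _ := step2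
    _ ≤ _ := step3
    _ ≤ 2 * (l2norm (pdx f) * l2norm (pdy f) + l2norm f * l2norm (pdx (pdy f))) := by
        have h := add_le_add cs1 cs2
        linarith
end

section
/- Let ū, v̄, q be smooth functions on (0,∞)² with ū > 0 and ∂_x ū + ∂_y v̄ = 0. Set U := ∂_y q, V := -∂_x q, u := ∂_y(ū q), v := -∂_x(ū q), and α := ū ∂_x v̄ + v̄ ∂_y v̄. Then ū ∂_x v + u ∂_x v̄ + v̄ ∂_y v + (∂_y v̄) v = ū² ∂_x V + ū v̄ ∂_y V + (ū ∂_x ū + v̄ ∂_y ū) V + α U + (∂_y α) q. -/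
open Set MeasureTheory Filter

section helpers
variable {f g : ℝ → ℝ → ℝ} {x y : ℝ}

lemma hasDerivAt_slice_x (hf : DifferentiableAt ℝ (Function.uncurry f) (x, y)) :
    HasDerivAt (fun x' => f x' y) (fderiv ℝ (Function.uncurry f) (x, y) (1, 0)) x :=
  by have h := hf.hasFDerivAt.comp_hasDerivAt x ((hasDerivAt_id x).prodMk (hasDerivAt_const x y))
     exact h

lemma hasDerivAt_slice_y (hf : DifferentiableAt ℝ (Function.uncurry f) (x, y)) :
    HasDerivAt (fun y' => f x y') (fderiv ℝ (Function.uncurry f) (x, y) (0, 1)) y :=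
  hf.hasFDerivAt.comp_hasDerivAt y ((hasDerivAt_const y x).prodMk (hasDerivAt_id y))

lemma pdx_eq_fderiv (hf : DifferentiableAt ℝ (Function.uncurry f) (x, y)) :
    pdx f x y = fderiv ℝ (Function.uncurry f) (x, y) (1, 0) :=
  (hasDerivAt_slice_x hf).deriv

lemma pdy_eq_fderiv (hf : DifferentiableAt ℝ (Function.uncurry f) (x, y)) :
    pdy f x y = fderiv ℝ (Function.uncurry f) (x, y) (0, 1) :=
  (hasDerivAt_slice_y hf).deriv

lemma hasDerivAt_slice_x' (hf : DifferentiableAt ℝ (Function.uncurry f) (x, y)) :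
    HasDerivAt (fun x' => f x' y) (pdx f x y) x :=
  (pdx_eq_fderiv hf) ▸ hasDerivAt_slice_x hf

lemma hasDerivAt_slice_y' (hf : DifferentiableAt ℝ (Function.uncurry f) (x, y)) :
    HasDerivAt (fun y' => f x y') (pdy f x y) y :=
  (pdy_eq_fderiv hf) ▸ hasDerivAt_slice_y hf

lemma pdx_mul (hf : DifferentiableAt ℝ (Function.uncurry f) (x, y))
    (hg : DifferentiableAt ℝ (Function.uncurry g) (x, y)) :
    pdx (fun a b => f a b * g a b) x y = pdx f x y * g x y + f x y * pdx g x y :=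
  ((hasDerivAt_slice_x' hf).mul (hasDerivAt_slice_x' hg)).deriv

lemma pdy_mul (hf : DifferentiableAt ℝ (Function.uncurry f) (x, y))
    (hg : DifferentiableAt ℝ (Function.uncurry g) (x, y)) :
    pdy (fun a b => f a b * g a b) x y = pdy f x y * g x y + f x y * pdy g x y :=
  ((hasDerivAt_slice_y' hf).mul (hasDerivAt_slice_y' hg)).deriv

lemma hasDerivAt_fderiv_x (hf : ContDiffAt ℝ 2 (Function.uncurry f) (x, y)) (w : ℝ × ℝ) :
    HasDerivAt (fun x' => fderiv ℝ (Function.uncurry f) (x', y) w)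
      (fderiv ℝ (fderiv ℝ (Function.uncurry f)) (x, y) (1, 0) w) x := by
  have h1 : DifferentiableAt ℝ (fderiv ℝ (Function.uncurry f)) (x, y) :=
    (hf.fderiv_right (m := 1) (by norm_num)).differentiableAt one_ne_zero
  have h2 := h1.hasFDerivAt.comp_hasDerivAt x ((hasDerivAt_id x).prodMk (hasDerivAt_const x y))
  have h3 := h2.clm_apply (hasDerivAt_const x w)
  simpa using h3

lemma hasDerivAt_fderiv_y (hf : ContDiffAt ℝ 2 (Function.uncurry f) (x, y)) (w : ℝ × ℝ) :
    HasDerivAt (fun y' => fderiv ℝ (Function.uncurry f) (x, y') w)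
      (fderiv ℝ (fderiv ℝ (Function.uncurry f)) (x, y) (0, 1) w) y := by
  have h1 : DifferentiableAt ℝ (fderiv ℝ (Function.uncurry f)) (x, y) :=
    (hf.fderiv_right (m := 1) (by norm_num)).differentiableAt one_ne_zero
  have h2 := h1.hasFDerivAt.comp_hasDerivAt y ((hasDerivAt_const y x).prodMk (hasDerivAt_id y))
  have h3 := h2.clm_apply (hasDerivAt_const y w)
  simpa using h3

lemma ee_pdx_x (hev : ∀ᶠ z in nhds (x, y), DifferentiableAt ℝ (Function.uncurry f) z) :
    (fun x' => pdx f x' y) =ᶠ[nhds x]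
      (fun x' => fderiv ℝ (Function.uncurry f) (x', y) (1, 0)) := by
  have hline : Filter.Tendsto (fun x' : ℝ => (x', y)) (nhds x) (nhds (x, y)) :=
    (Continuous.prodMk_left y).continuousAt
  filter_upwards [hline.eventually hev] with x' hx' using pdx_eq_fderiv hx'

lemma ee_pdx_y (hev : ∀ᶠ z in nhds (x, y), DifferentiableAt ℝ (Function.uncurry f) z) :
    (fun y' => pdx f x y') =ᶠ[nhds y]
      (fun y' => fderiv ℝ (Function.uncurry f) (x, y') (1, 0)) := by
  have hline : Filter.Tendsto (fun y' : ℝ => (x, y')) (nhds y) (nhds (x, y)) :=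
    (Continuous.prodMk_right x).continuousAt
  filter_upwards [hline.eventually hev] with y' hy' using pdx_eq_fderiv hy'

lemma ee_pdy_x (hev : ∀ᶠ z in nhds (x, y), DifferentiableAt ℝ (Function.uncurry f) z) :
    (fun x' => pdy f x' y) =ᶠ[nhds x]
      (fun x' => fderiv ℝ (Function.uncurry f) (x', y) (0, 1)) := by
  have hline : Filter.Tendsto (fun x' : ℝ => (x', y)) (nhds x) (nhds (x, y)) :=
    (Continuous.prodMk_left y).continuousAt
  filter_upwards [hline.eventually hev] with x' hx' using pdy_eq_fderiv hx'

lemma ee_pdy_y (hev : ∀ᶠ z in nhds (x, y), DifferentiableAt ℝ (Function.uncurry f) z) :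
    (fun y' => pdy f x y') =ᶠ[nhds y]
      (fun y' => fderiv ℝ (Function.uncurry f) (x, y') (0, 1)) := by
  have hline : Filter.Tendsto (fun y' : ℝ => (x, y')) (nhds y) (nhds (x, y)) :=
    (Continuous.prodMk_right x).continuousAt
  filter_upwards [hline.eventually hev] with y' hy' using pdy_eq_fderiv hy'

lemma hasDerivAt_pdx_x (hev : ∀ᶠ z in nhds (x, y), DifferentiableAt ℝ (Function.uncurry f) z)
    (hf : ContDiffAt ℝ 2 (Function.uncurry f) (x, y)) :
    HasDerivAt (fun x' => pdx f x' y) (pdx (pdx f) x y) x := by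
  have h := ((ee_pdx_x hev).hasDerivAt_iff).mpr (hasDerivAt_fderiv_x hf (1, 0))
  rw [show pdx (pdx f) x y = deriv (fun x' => pdx f x' y) x from rfl, h.deriv]; exact h

lemma hasDerivAt_pdx_y (hev : ∀ᶠ z in nhds (x, y), DifferentiableAt ℝ (Function.uncurry f) z)
    (hf : ContDiffAt ℝ 2 (Function.uncurry f) (x, y)) :
    HasDerivAt (fun y' => pdx f x y') (pdy (pdx f) x y) y := by
  have h := ((ee_pdx_y hev).hasDerivAt_iff).mpr (hasDerivAt_fderiv_y hf (1, 0))
  rw [show pdy (pdx f) x y = deriv (fun y' => pdx f x y') y from rfl, h.deriv]; exact h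

lemma hasDerivAt_pdy_x (hev : ∀ᶠ z in nhds (x, y), DifferentiableAt ℝ (Function.uncurry f) z)
    (hf : ContDiffAt ℝ 2 (Function.uncurry f) (x, y)) :
    HasDerivAt (fun x' => pdy f x' y) (pdx (pdy f) x y) x := by
  have h := ((ee_pdy_x hev).hasDerivAt_iff).mpr (hasDerivAt_fderiv_x hf (0, 1))
  rw [show pdx (pdy f) x y = deriv (fun x' => pdy f x' y) x from rfl, h.deriv]; exact h

lemma hasDerivAt_pdy_y (hev : ∀ᶠ z in nhds (x, y), DifferentiableAt ℝ (Function.uncurry f) z)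
    (hf : ContDiffAt ℝ 2 (Function.uncurry f) (x, y)) :
    HasDerivAt (fun y' => pdy f x y') (pdy (pdy f) x y) y := by
  have h := ((ee_pdy_y hev).hasDerivAt_iff).mpr (hasDerivAt_fderiv_y hf (0, 1))
  rw [show pdy (pdy f) x y = deriv (fun y' => pdy f x y') y from rfl, h.deriv]; exact h

/-- Schwarz symmetry of mixed partials, curried version. -/
lemma pdy_pdx_eq_pdx_pdy (hev : ∀ᶠ z in nhds (x, y), DifferentiableAt ℝ (Function.uncurry f) z)
    (hf : ContDiffAt ℝ 2 (Function.uncurry f) (x, y)) :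
    pdy (pdx f) x y = pdx (pdy f) x y := by
  have h1 : pdy (pdx f) x y
      = fderiv ℝ (fderiv ℝ (Function.uncurry f)) (x, y) (0, 1) (1, 0) :=
    (((ee_pdx_y hev).hasDerivAt_iff).mpr (hasDerivAt_fderiv_y hf (1, 0))).deriv
  have h2 : pdx (pdy f) x y
      = fderiv ℝ (fderiv ℝ (Function.uncurry f)) (x, y) (1, 0) (0, 1) :=
    (((ee_pdy_x hev).hasDerivAt_iff).mpr (hasDerivAt_fderiv_x hf (0, 1))).deriv
  rw [h1, h2, hf.isSymmSndFDerivAt (by simp) (0, 1) (1, 0)]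

end helpers

/-- Rewriting the linearized transport part of the normal-momentum equation around a
divergence-free background `(ū, v̄)` in good unknowns: with `U = ∂_y q`, `V = -∂_x q`,
`u = ∂_y(ū q)`, `v = -∂_x(ū q)` and `α = ū v̄_x + v̄ v̄_y`,
`ū v_x + u v̄_x + v̄ v_y + v̄_y v = ū² V_x + ū v̄ V_y + (ū ū_x + v̄ ū_y) V + α U + α_y q`. -/
theorem stmt_7 (ub vb q u v U V α : ℝ → ℝ → ℝ)
    (hub : ContDiffOn ℝ (⊤ : ℕ∞) (Function.uncurry ub) (Ioi 0 ×ˢ Ioi 0))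
    (hvb : ContDiffOn ℝ (⊤ : ℕ∞) (Function.uncurry vb) (Ioi 0 ×ˢ Ioi 0))
    (hq : ContDiffOn ℝ (⊤ : ℕ∞) (Function.uncurry q) (Ioi 0 ×ˢ Ioi 0))
    (hpos : ∀ x ∈ Ioi (0:ℝ), ∀ y ∈ Ioi (0:ℝ), 0 < ub x y)
    (hdiv : ∀ x ∈ Ioi (0:ℝ), ∀ y ∈ Ioi (0:ℝ), pdx ub x y + pdy vb x y = 0)
    (hU : U = pdy q)
    (hV : V = fun a b => -(pdx q a b))
    (hu : u = pdy (fun a b => ub a b * q a b))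
    (hv : v = fun a b => -(pdx (fun c d => ub c d * q c d) a b))
    (hα : α = fun a b => ub a b * pdx vb a b + vb a b * pdy vb a b) :
    ∀ x ∈ Ioi (0:ℝ), ∀ y ∈ Ioi (0:ℝ),
      ub x y * pdx v x y + u x y * pdx vb x y + vb x y * pdy v x y + pdy vb x y * v x y
        = (ub x y)^2 * pdx V x y + ub x y * vb x y * pdy V x y
          + (ub x y * pdx ub x y + vb x y * pdy ub x y) * V x y
          + α x y * U x y + pdy α x y * q x y := by
  subst hU hV hu hv hα
  intro x hx y hy
  have hs : IsOpen ((Ioi 0 : Set ℝ) ×ˢ (Ioi 0 : Set ℝ)) := isOpen_Ioi.prod isOpen_Ioi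
  have hp : (x, y) ∈ (Ioi 0 : Set ℝ) ×ˢ (Ioi 0 : Set ℝ) := ⟨hx, hy⟩
  have hsn : (Ioi 0 : Set ℝ) ×ˢ (Ioi 0 : Set ℝ) ∈ nhds (x, y) := hs.mem_nhds hp
  -- smoothness data
  have cub2 : ContDiffAt ℝ 2 (Function.uncurry ub) (x, y) :=
    (hub.contDiffAt hsn).of_le (WithTop.coe_le_coe.mpr le_top)
  have cvb2 : ContDiffAt ℝ 2 (Function.uncurry vb) (x, y) :=
    (hvb.contDiffAt hsn).of_le (WithTop.coe_le_coe.mpr le_top)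
  have cq2 : ContDiffAt ℝ 2 (Function.uncurry q) (x, y) :=
    (hq.contDiffAt hsn).of_le (WithTop.coe_le_coe.mpr le_top)
  have dub : DifferentiableAt ℝ (Function.uncurry ub) (x, y) :=
    cub2.differentiableAt (by norm_num)
  have dvb : DifferentiableAt ℝ (Function.uncurry vb) (x, y) :=
    cvb2.differentiableAt (by norm_num)
  have dq : DifferentiableAt ℝ (Function.uncurry q) (x, y) :=
    cq2.differentiableAt (by norm_num)
  have hev_ub : ∀ᶠ z in nhds (x, y), DifferentiableAt ℝ (Function.uncurry ub) z := by
    filter_upwards [hsn] with z hz using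
      ((hub.contDiffAt (hs.mem_nhds hz)).of_le (WithTop.coe_le_coe.mpr le_top)).differentiableAt (n := 2) (by norm_num)
  have hev_vb : ∀ᶠ z in nhds (x, y), DifferentiableAt ℝ (Function.uncurry vb) z := by
    filter_upwards [hsn] with z hz using
      ((hvb.contDiffAt (hs.mem_nhds hz)).of_le (WithTop.coe_le_coe.mpr le_top)).differentiableAt (n := 2) (by norm_num)
  have hev_q : ∀ᶠ z in nhds (x, y), DifferentiableAt ℝ (Function.uncurry q) z := by
    filter_upwards [hsn] with z hz using
      ((hq.contDiffAt (hs.mem_nhds hz)).of_le (WithTop.coe_le_coe.mpr le_top)).differentiableAt (n := 2) (by norm_num)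
  have hlinex : Filter.Tendsto (fun x' : ℝ => (x', y)) (nhds x) (nhds (x, y)) :=
    (Continuous.prodMk_left y).continuousAt
  have hliney : Filter.Tendsto (fun y' : ℝ => (x, y')) (nhds y) (nhds (x, y)) :=
    (Continuous.prodMk_right x).continuousAt
  -- product rule in a neighbourhood, along the two axes
  have eeMx : (fun x' => pdx (fun c d => ub c d * q c d) x' y) =ᶠ[nhds x]
      (fun x' => pdx ub x' y * q x' y + ub x' y * pdx q x' y) := by
    filter_upwards [hlinex.eventually hev_ub, hlinex.eventually hev_q] with x' h1 h2 using
      pdx_mul h1 h2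
  have eeMy : (fun y' => pdx (fun c d => ub c d * q c d) x y') =ᶠ[nhds y]
      (fun y' => pdx ub x y' * q x y' + ub x y' * pdx q x y') := by
    filter_upwards [hliney.eventually hev_ub, hliney.eventually hev_q] with y' h1 h2 using
      pdx_mul h1 h2
  -- derivatives of the product-rule expansions
  have hMx : HasDerivAt (fun x' => pdx (fun c d => ub c d * q c d) x' y)
      (pdx (pdx ub) x y * q x y + pdx ub x y * pdx q x y
        + (pdx ub x y * pdx q x y + ub x y * pdx (pdx q) x y)) x :=
    eeMx.hasDerivAt_iff.mpr
      (((hasDerivAt_pdx_x hev_ub cub2).mul (hasDerivAt_slice_x' dq)).add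
        ((hasDerivAt_slice_x' dub).mul (hasDerivAt_pdx_x hev_q cq2)))
  have hMy : HasDerivAt (fun y' => pdx (fun c d => ub c d * q c d) x y')
      (pdy (pdx ub) x y * q x y + pdx ub x y * pdy q x y
        + (pdy ub x y * pdx q x y + ub x y * pdy (pdx q) x y)) y :=
    eeMy.hasDerivAt_iff.mpr
      (((hasDerivAt_pdx_y hev_ub cub2).mul (hasDerivAt_slice_y' dq)).add
        ((hasDerivAt_slice_y' dub).mul (hasDerivAt_pdx_y hev_q cq2)))
  have F1 : pdy (fun a b => ub a b * q a b) x y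
      = pdy ub x y * q x y + ub x y * pdy q x y := pdy_mul dub dq
  have F2 : pdx (fun a b => ub a b * q a b) x y
      = pdx ub x y * q x y + ub x y * pdx q x y := pdx_mul dub dq
  have F3 : pdx (fun a b => -(pdx (fun c d => ub c d * q c d) a b)) x y
      = -(pdx (pdx ub) x y * q x y + pdx ub x y * pdx q x y
        + (pdx ub x y * pdx q x y + ub x y * pdx (pdx q) x y)) := hMx.neg.deriv
  have F4 : pdy (fun a b => -(pdx (fun c d => ub c d * q c d) a b)) x y
      = -(pdy (pdx ub) x y * q x y + pdx ub x y * pdy q x y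
        + (pdy ub x y * pdx q x y + ub x y * pdy (pdx q) x y)) := hMy.neg.deriv
  have F5 : pdx (fun a b => -(pdx q a b)) x y = -(pdx (pdx q) x y) :=
    (hasDerivAt_pdx_x hev_q cq2).neg.deriv
  have F6 : pdy (fun a b => -(pdx q a b)) x y = -(pdy (pdx q) x y) :=
    (hasDerivAt_pdx_y hev_q cq2).neg.deriv
  have F7 : pdy (fun a b => ub a b * pdx vb a b + vb a b * pdy vb a b) x y
      = pdy ub x y * pdx vb x y + ub x y * pdy (pdx vb) x y
        + (pdy vb x y * pdy vb x y + vb x y * pdy (pdy vb) x y) :=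
    (((hasDerivAt_slice_y' dub).mul (hasDerivAt_pdx_y hev_vb cvb2)).add
      ((hasDerivAt_slice_y' dvb).mul (hasDerivAt_pdy_y hev_vb cvb2))).deriv
  -- divergence-free relations
  have d0 : pdx ub x y = -(pdy vb x y) := by
    have := hdiv x hx y hy; linarith
  have eeDx : (fun x' => pdx ub x' y) =ᶠ[nhds x] (fun x' => -(pdy vb x' y)) := by
    filter_upwards [hlinex.eventually hsn] with x' hx' using by
      have := hdiv x' hx'.1 y hx'.2; linarith
  have eeDy : (fun y' => pdx ub x y') =ᶠ[nhds y] (fun y' => -(pdy vb x y')) := by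
    filter_upwards [hliney.eventually hsn] with y' hy' using by
      have := hdiv x hy'.1 y' hy'.2; linarith
  have dxx : pdx (pdx ub) x y = -(pdx (pdy vb) x y) :=
    eeDx.deriv_eq.trans (hasDerivAt_pdy_x hev_vb cvb2).neg.deriv
  have dxy : pdy (pdx ub) x y = -(pdy (pdy vb) x y) :=
    eeDy.deriv_eq.trans (hasDerivAt_pdy_y hev_vb cvb2).neg.deriv
  have sym : pdy (pdx vb) x y = pdx (pdy vb) x y := pdy_pdx_eq_pdx_pdy hev_vb cvb2
  beta_reduce
  rw [F1, F3, F4, F5, F6, F7, F2, d0, dxx, dxy, sym]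
  ring
end
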